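/- Consider the map F : ℝ² × ℝ² × ℝ² → ℝ given by F(e, p_j, p_k) = A(e, p_j, p_k). The (Fréchet) derivative of F vanishes at the point (e, p_j, p_k) if and only if e = p_j = p_k. (This is the gradient nonvanishing property used in Proposition 2 to show that each switching surface {A_jk = 0} is a smooth hypersurface whenever the three points are not all equal.) -/

import Mathlib

/-!
With the nondegenerate alternating form `ω(u, w) = u₀w₁ − u₁w₀` on `ℝ²` one has
`A(a, b, c) = ½ (ω(a, b) + ω(b, c) + ω(c, a))`, so the partial derivatives of `A` in `a`, `b`, `c`
are `½ ω(c − b, ·)`, `½ ω(a − c, ·)` and `½ ω(b − a, ·)`. By nondegeneracy of `ω` they all vanish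
exactly when `a = b = c`.
-/

noncomputable section

/-- Signed area `A(a,b,c) = ½·[a₁(b₂−c₂) + b₁(c₂−a₂) + c₁(a₂−b₂)]`. -/
def sarea (a b c : EuclideanSpace ℝ (Fin 2)) : ℝ :=
  (1/2) * (a 0 * (b 1 - c 1) + b 0 * (c 1 - a 1) + c 0 * (a 1 - b 1))

local notation "E" => EuclideanSpace ℝ (Fin 2)

theorem ContinuousLinearMap.coprod_eq_zero_iff {R M₁ M₂ M : Type*} [Semiring R]
    [TopologicalSpace M₁] [TopologicalSpace M₂] [TopologicalSpace M]
    [AddCommMonoid M₁] [AddCommMonoid M₂] [AddCommMonoid M] [Module R M₁] [Module R M₂]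
    [Module R M] [ContinuousAdd M] {f₁ : M₁ →L[R] M} {f₂ : M₂ →L[R] M} :
    f₁.coprod f₂ = 0 ↔ f₁ = 0 ∧ f₂ = 0 := by
  refine ⟨fun h => ⟨?_, ?_⟩, fun ⟨h₁, h₂⟩ => by ext <;> simp [h₁, h₂]⟩
  · rw [← coprod_comp_inl f₁ f₂, h, zero_comp]
  · rw [← coprod_comp_inr f₁ f₂, h, zero_comp]

def crossForm : E →L[ℝ] E →L[ℝ] ℝ :=
  (EuclideanSpace.proj 0).smulRight (EuclideanSpace.proj 1) -
    (EuclideanSpace.proj 1).smulRight (EuclideanSpace.proj 0)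

@[simp]
theorem crossForm_apply (u w : E) : crossForm u w = u 0 * w 1 - u 1 * w 0 := by
  simp [crossForm]

theorem crossForm_eq_zero_iff {u : E} : crossForm u = 0 ↔ u = 0 := by
  refine ⟨fun h => ?_, fun h => by simp [h]⟩
  have h₀ : u 1 = 0 := by simpa using DFunLike.congr_fun h (EuclideanSpace.single 0 1)
  have h₁ : u 0 = 0 := by simpa using DFunLike.congr_fun h (EuclideanSpace.single 1 1)
  ext i
  fin_cases i <;> simpa

theorem sarea_eq_crossForm (a b c : E) :
    sarea a b c = (1/2) * (crossForm a b + crossForm b c + crossForm c a) := by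
  simp only [sarea, crossForm_apply]; ring

def sareaFDeriv (x : E × E × E) : E × E × E →L[ℝ] ℝ :=
  (1/2 : ℝ) • (crossForm (x.2.2 - x.2.1)).coprod
    ((crossForm (x.1 - x.2.2)).coprod (crossForm (x.2.1 - x.1)))

theorem hasFDerivAt_sarea (x : E × E × E) :
    HasFDerivAt (fun y : E × E × E => sarea y.1 y.2.1 y.2.2) (sareaFDeriv x) x := by
  have ha := hasFDerivAt_fst (𝕜 := ℝ) (p := x)
  have hb := (hasFDerivAt_snd (𝕜 := ℝ) (p := x)).fst
  have hc := (hasFDerivAt_snd (𝕜 := ℝ) (p := x)).snd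
  simp_rw [sarea_eq_crossForm]
  refine ((((crossForm.hasFDerivAt_of_bilinear ha hb).add
    (crossForm.hasFDerivAt_of_bilinear hb hc)).add
    (crossForm.hasFDerivAt_of_bilinear hc ha)).const_mul (1/2)).congr_fderiv ?_
  ext v <;> simp [sareaFDeriv] <;> ring

theorem sareaFDeriv_eq_zero_iff (x : E × E × E) :
    sareaFDeriv x = 0 ↔ x.1 = x.2.1 ∧ x.2.1 = x.2.2 := by
  simp only [sareaFDeriv, smul_eq_zero, one_div, inv_eq_zero, OfNat.ofNat_ne_zero, false_or,
    ContinuousLinearMap.coprod_eq_zero_iff, crossForm_eq_zero_iff, sub_eq_zero]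
  grind

/-- The Fréchet derivative of `F(e, p_j, p_k) = A(e, p_j, p_k)` vanishes at `(e, p_j, p_k)`
iff `e = p_j = p_k`. -/
theorem stmt_16 (x : EuclideanSpace ℝ (Fin 2) × EuclideanSpace ℝ (Fin 2) ×
    EuclideanSpace ℝ (Fin 2)) :
    fderiv ℝ (fun y : EuclideanSpace ℝ (Fin 2) × EuclideanSpace ℝ (Fin 2) ×
        EuclideanSpace ℝ (Fin 2) => sarea y.1 y.2.1 y.2.2) x = 0 ↔
      x.1 = x.2.1 ∧ x.2.1 = x.2.2 := by
  rw [(hasFDerivAt_sarea x).fderiv, sareaFDeriv_eq_zero_iff]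

end
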